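/- Let (X_t)_{t∈ℤ} be a centred weakly stationary time series with autocovariances C(j) = Cov(X_t, X_{t+j}) satisfying Σ_{j=1}^∞ j·|C(j)| < ∞, and let K: [0,∞) → ℝ satisfy K(0) = 1, K continuous at 0, and sup_{x≥0}|K(x)| < ∞. Define σ̂²_n = (1/n)·Σ_{s,t=1}^n K(|s−t|/m)·X_s X_t and σ² = Σ_{j=−∞}^∞ C(j). Then E[σ̂²_n] − σ² = 2·Σ_{j=1}^n (K(j/m) − 1)·C(j) + O(1/n) as m, n → ∞, and consequently E[σ̂²_n] − σ² → 0 as m, n → ∞. -/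

import Mathlib

/-!
Taking expectations term by term, `E[σ̂²_n] = C(0) + (2/n) Σ_{j=1}^n (n - j) K(j/m) C(j)`, since the
lag `j` occurs `n - j` times on each side of the diagonal of `[1, n]²`. Subtracting
`σ² = C(0) + 2 Σ_{j≥1} C(j)` and the main term leaves `-(2/n) Σ_{j≤n} j K(j/m) C(j) - 2 Σ_{j>n} C(j)`,
and both pieces are `O(Σ j|C(j)| / n)`. The main term tends to `0` by dominated convergence for
series: `K(j/m) → K(0) = 1` for each fixed `j`, with the summable majorant `(sup|K| + 1)|C(j)|`.
-/

open MeasureTheory Filter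
open scoped BigOperators Topology

/-- Covariance of two real random variables: `Cov(f,g) = E[fg] - E[f]E[g]`. -/
noncomputable def cov {Ω : Type*} [MeasurableSpace Ω] (μ : Measure Ω) (f g : Ω → ℝ) : ℝ :=
  (∫ ω, f ω * g ω ∂μ) - (∫ ω, f ω ∂μ) * (∫ ω, g ω ∂μ)

/-- The kernel long-run variance estimator
`σ̂²_{m,n} = n⁻¹ Σ_{s,t=1}^n K(|s−t|/m) X_s X_t`. -/
noncomputable def hatSigmaSq {Ω : Type*} (X : ℤ → Ω → ℝ) (K : ℝ → ℝ) (m n : ℕ) (ω : Ω) : ℝ :=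
  (n : ℝ)⁻¹ * ∑ s ∈ Finset.Icc (1 : ℤ) (n : ℤ), ∑ t ∈ Finset.Icc (1 : ℤ) (n : ℤ),
    K (|(s : ℝ) - (t : ℝ)| / (m : ℝ)) * X s ω * X t ω

open Finset

theorem sum_Icc_intCast {M : Type*} [AddCommMonoid M] (f : ℤ → M) (a b : ℕ) :
    ∑ s ∈ Icc (a : ℤ) b, f s = ∑ s ∈ Icc a b, f s := by
  refine (sum_nbij' ((↑) : ℕ → ℤ) Int.toNat (fun s hs => ?_) (fun s hs => ?_) (fun s _ => ?_)
    (fun s hs => ?_) (fun _ _ => rfl)).symm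
  all_goals simp only [mem_Icc] at *; omega

theorem sum_Icc_one_eq_sum_range {M : Type*} [AddCommMonoid M] (f : ℕ → M) (n : ℕ) :
    ∑ j ∈ Icc 1 n, f j = ∑ j ∈ range n, f (j + 1) := by
  rw [← Ico_add_one_right_eq_Icc, sum_Ico_eq_sum_range, add_tsub_cancel_right]
  exact sum_congr rfl fun j _ => by rw [add_comm]

theorem sum_Icc_apply_sub_eq_sum_Icc {M : Type*} [AddCommMonoid M] (F : ℤ → M) (n : ℕ) :
    ∑ s ∈ Icc 1 n, F ((n + 1 : ℕ) - s) = ∑ j ∈ Icc 1 n, F j := by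
  refine sum_nbij' (n + 1 - ·) (n + 1 - ·) (fun s hs => ?_) (fun s hs => ?_) (fun s hs => ?_)
    (fun s hs => ?_) (fun s hs => ?_) <;> simp only [mem_Icc] at hs ⊢
  all_goals first | omega | (congr 1; omega)

theorem sum_Icc_sum_Icc_apply_sub {R : Type*} [CommRing R] {F : ℤ → R} (hF : F.Even) (n : ℕ) :
    ∑ s ∈ Icc 1 n, ∑ t ∈ Icc 1 n, F (t - s)
      = n * F 0 + 2 * ∑ j ∈ Icc 1 n, ((n : R) - j) * F j := by
  induction n with
  | zero => simp
  | succ n ih =>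
    have hcol : ∑ s ∈ Icc 1 n, F ((n + 1 : ℕ) - s) = ∑ j ∈ Icc 1 n, F j :=
      sum_Icc_apply_sub_eq_sum_Icc F n
    have hrow : ∑ t ∈ Icc 1 n, F (t - (n + 1 : ℕ)) = ∑ j ∈ Icc 1 n, F j := by
      rw [← hcol]
      exact sum_congr rfl fun t _ => by rw [← hF, neg_sub]
    simp only [sum_Icc_succ_top (Nat.le_add_left 1 n), sum_add_distrib, ih, hcol, hrow, sub_self]
    push_cast
    simp only [zero_mul, add_zero, add_sub_right_comm _ (1 : R), add_mul,
      sum_add_distrib, one_mul]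
    ring

theorem Function.Even.tsum_int_eq {f : ℤ → ℝ} (hf : f.Even) (hsum : Summable fun j : ℕ => f j) :
    ∑' j : ℤ, f j = f 0 + 2 * ∑' j : ℕ, f (j + 1 : ℕ) := by
  have hpos : Summable fun j : ℕ => f (j + 1 : ℕ) := (summable_nat_add_iff 1).mpr hsum
  have hneg : Summable fun j : ℕ => f (-(j + 1 : ℕ)) := hpos.congr fun j => (hf _).symm
  push_cast at hpos hneg ⊢
  rw [tsum_of_add_one_of_neg_add_one hpos hneg, tsum_congr fun j : ℕ => hf ((j : ℤ) + 1)]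
  ring

section Series

variable {c : ℕ → ℝ}

theorem summable_abs_of_summable_natCast_mul_abs (hc : Summable fun j : ℕ => (j : ℝ) * |c j|) :
    Summable fun j => |c j| := by
  refine (summable_nat_add_iff 1).mp (((summable_nat_add_iff 1).mpr hc).of_nonneg_of_le
    (fun j => abs_nonneg _) fun j => ?_)
  push_cast
  nlinarith [abs_nonneg (c (j + 1)), (j.cast_nonneg : (0 : ℝ) ≤ j)]

theorem tsum_add_one_eq_sum_Icc_add_tsum (hc : Summable c) (n : ℕ) :
    ∑' j, c (j + 1) = ∑ j ∈ Icc 1 n, c j + ∑' j, c (j + n + 1) := by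
  rw [sum_Icc_one_eq_sum_range, ← ((summable_nat_add_iff 1).mpr hc).sum_add_tsum_nat_add n]

theorem natCast_mul_abs_tsum_tail_le (hc : Summable fun j : ℕ => (j : ℝ) * |c j|) (n : ℕ) :
    n * |∑' j, c (j + n + 1)| ≤ ∑' j : ℕ, (j : ℝ) * |c j| := by
  have habs : Summable fun j => |c (j + (n + 1))| :=
    (summable_nat_add_iff (f := fun j => |c j|) (n + 1)).mpr
      (summable_abs_of_summable_natCast_mul_abs hc)
  have htail : Summable fun j : ℕ => ((j + (n + 1) : ℕ) : ℝ) * |c (j + (n + 1))| :=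
    (summable_nat_add_iff (f := fun j : ℕ => (j : ℝ) * |c j|) (n + 1)).mpr hc
  simp only [add_assoc]
  calc n * |∑' j, c (j + (n + 1))|
      ≤ n * ∑' j, |c (j + (n + 1))| := by
        gcongr
        simpa only [Real.norm_eq_abs] using norm_tsum_le_tsum_norm
          (f := fun j => c (j + (n + 1))) (by simpa only [Real.norm_eq_abs] using habs)
    _ = ∑' j, n * |c (j + (n + 1))| := tsum_mul_left.symm
    _ ≤ ∑' j : ℕ, ((j + (n + 1) : ℕ) : ℝ) * |c (j + (n + 1))| := by
        refine (habs.mul_left (n : ℝ)).tsum_le_tsum (fun j => ?_) htail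
        gcongr
        linarith [(j.cast_nonneg : (0 : ℝ) ≤ j)]
    _ ≤ ∑' j : ℕ, (j : ℝ) * |c j| := by
        rw [← hc.sum_add_tsum_nat_add (n + 1)]
        exact le_add_of_nonneg_left (sum_nonneg fun j _ => by positivity)

theorem abs_sum_Icc_natCast_mul_le {k : ℕ → ℝ} {M : ℝ} (hk : ∀ j, |k j| ≤ M)
    (hc : Summable fun j : ℕ => (j : ℝ) * |c j|) (n : ℕ) :
    |∑ j ∈ Icc 1 n, j * (k j * c j)| ≤ M * ∑' j : ℕ, (j : ℝ) * |c j| := by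
  calc |∑ j ∈ Icc 1 n, j * (k j * c j)|
      ≤ ∑ j ∈ Icc 1 n, M * (j * |c j|) := by
        refine (abs_sum_le_sum_abs _ _).trans (sum_le_sum fun j _ => ?_)
        rw [abs_mul, abs_mul, Nat.abs_cast, mul_left_comm]
        gcongr
        exact hk j
    _ = M * ∑ j ∈ Icc 1 n, (j : ℝ) * |c j| := (mul_sum ..).symm
    _ ≤ M * ∑' j : ℕ, (j : ℝ) * |c j| := by
        gcongr
        · exact (abs_nonneg _).trans (hk 0)
        · exact hc.sum_le_tsum _ fun j _ => by positivity

theorem bias_remainder_eq (k : ℕ → ℝ) (hc : Summable c) {n : ℕ} (hn : n ≠ 0) :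
    (n : ℝ)⁻¹ * (n * c 0 + 2 * ∑ j ∈ Icc 1 n, ((n : ℝ) - j) * (k j * c j))
        - (c 0 + 2 * ∑' j, c (j + 1)) - 2 * ∑ j ∈ Icc 1 n, (k j - 1) * c j
      = -(2 * ((n : ℝ)⁻¹ * ∑ j ∈ Icc 1 n, j * (k j * c j) + ∑' j, c (j + n + 1))) := by
  have hn' : (n : ℝ) ≠ 0 := by exact_mod_cast hn
  rw [tsum_add_one_eq_sum_Icc_add_tsum hc n]
  simp only [sub_mul, one_mul, sum_sub_distrib, ← mul_sum]
  field_simp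
  ring

theorem abs_bias_remainder_le {k : ℕ → ℝ} {M : ℝ} (hk : ∀ j, |k j| ≤ M)
    (hc : Summable fun j : ℕ => (j : ℝ) * |c j|) {n : ℕ} (hn : n ≠ 0) :
    |(n : ℝ)⁻¹ * (n * c 0 + 2 * ∑ j ∈ Icc 1 n, ((n : ℝ) - j) * (k j * c j))
        - (c 0 + 2 * ∑' j, c (j + 1)) - 2 * ∑ j ∈ Icc 1 n, (k j - 1) * c j|
      ≤ 2 * (M + 1) * (∑' j : ℕ, (j : ℝ) * |c j|) / n := by
  set S := ∑' j : ℕ, (j : ℝ) * |c j|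
  have hn' : (0 : ℝ) < n := by positivity
  have hweighted := abs_sum_Icc_natCast_mul_le hk hc n
  have htail : |∑' j, c (j + n + 1)| ≤ S / n := by
    rw [le_div_iff₀ hn', mul_comm]
    exact natCast_mul_abs_tsum_tail_le hc n
  rw [bias_remainder_eq k (summable_abs_of_summable_natCast_mul_abs hc).of_abs hn, abs_neg, abs_mul,
    abs_two]
  calc 2 * |(n : ℝ)⁻¹ * ∑ j ∈ Icc 1 n, j * (k j * c j) + ∑' j, c (j + n + 1)|
      ≤ 2 * ((n : ℝ)⁻¹ * |∑ j ∈ Icc 1 n, j * (k j * c j)| + |∑' j, c (j + n + 1)|) := by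
        grw [abs_add_le, abs_mul, abs_inv, Nat.abs_cast]
    _ ≤ 2 * ((n : ℝ)⁻¹ * (M * S) + S / n) := by gcongr
    _ = 2 * (M + 1) * S / n := by ring

end Series

theorem tendsto_sum_mul_of_tendsto_zero {α : Type*} {l : Filter α} {k : α → ℕ → ℝ} {c : ℕ → ℝ}
    {M : ℝ} (s : α → Finset ℕ) (hk : ∀ j, Tendsto (k · j) l (𝓝 0)) (hM : ∀ a j, |k a j| ≤ M)
    (hc : Summable fun j => |c j|) :
    Tendsto (fun a => ∑ j ∈ s a, k a j * c j) l (𝓝 0) := by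
  have hsum (a : α) : ∑ j ∈ s a, k a j * c j = ∑' j, if j ∈ s a then k a j * c j else 0 :=
    (tsum_eq_sum fun j hj => if_neg hj).trans (sum_congr rfl fun j hj => if_pos hj) |>.symm
  have hpt (j : ℕ) : Tendsto (fun a => if j ∈ s a then k a j * c j else 0) l (𝓝 0) := by
    refine squeeze_zero_norm (fun a => ?_) (by simpa using ((hk j).mul_const (c j)).norm)
    split_ifs <;> simp [mul_nonneg, abs_nonneg]
  have hbound (a : α) (j : ℕ) : ‖if j ∈ s a then k a j * c j else 0‖ ≤ M * |c j| := by
    have hM0 : 0 ≤ M := (abs_nonneg _).trans (hM a j)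
    split_ifs
    · simpa only [Real.norm_eq_abs, abs_mul] using mul_le_mul_of_nonneg_right (hM a j) (abs_nonneg _)
    · simpa using mul_nonneg hM0 (abs_nonneg (c j))
  simp_rw [hsum]
  simpa using tendsto_tsum_of_dominated_convergence (hc.mul_left M) hpt (.of_forall hbound)

theorem tendsto_apply_div_natCast {K : ℝ → ℝ} (hK : ContinuousWithinAt K (Set.Ici 0) 0) {x : ℝ}
    (hx : 0 ≤ x) : Tendsto (fun m : ℕ => K (x / m)) atTop (𝓝 (K 0)) :=
  hK.tendsto.comp <| tendsto_nhdsWithin_iff.mpr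
    ⟨tendsto_const_div_atTop_nhds_zero_nat x, .of_forall fun m => div_nonneg hx m.cast_nonneg⟩

theorem tendsto_sum_Icc_kernel_sub_one_mul {K : ℝ → ℝ} {M : ℝ} {c : ℕ → ℝ} (hK0 : K 0 = 1)
    (hKcont : ContinuousWithinAt K (Set.Ici 0) 0) (hKbdd : ∀ x, 0 ≤ x → |K x| ≤ M)
    (hc : Summable fun j => |c j|) :
    Tendsto (fun q : ℕ × ℕ => ∑ j ∈ Icc 1 q.2, (K (j / q.1) - 1) * c j) (atTop ×ˢ atTop) (𝓝 0) := by
  have hpt (j : ℕ) : Tendsto (fun q : ℕ × ℕ => K (j / q.1) - 1) (atTop ×ˢ atTop) (𝓝 0) := by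
    have h := (tendsto_apply_div_natCast hKcont (Nat.cast_nonneg (α := ℝ) j)).sub_const 1
    rw [hK0, sub_self] at h
    exact h.comp tendsto_fst
  have hle (q : ℕ × ℕ) (j : ℕ) : |K (j / q.1) - 1| ≤ M + 1 :=
    (abs_sub _ _).trans (by simpa using hKbdd _ (by positivity))
  exact tendsto_sum_mul_of_tendsto_zero (k := fun (q : ℕ × ℕ) (j : ℕ) => K (j / q.1) - 1)
    (fun q => Icc 1 q.2) hpt hle hc

theorem cov_comm {Ω : Type*} [MeasurableSpace Ω] (μ : Measure Ω) (f g : Ω → ℝ) :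
    cov μ f g = cov μ g f := by
  simp only [cov, mul_comm]

section Stationary

variable {Ω : Type*} [MeasurableSpace Ω] {μ : Measure Ω} {X : ℤ → Ω → ℝ} {Cz : ℤ → ℝ}

theorem even_of_cov_eq (hstat : ∀ t j : ℤ, cov μ (X t) (X (t + j)) = Cz j) : Cz.Even := by
  intro j
  rw [← hstat j (-j), ← hstat 0 j, add_neg_cancel, zero_add, cov_comm]

theorem integral_mul_eq_of_cov_eq (hcent : ∀ t, ∫ ω, X t ω ∂μ = 0)
    (hstat : ∀ t j : ℤ, cov μ (X t) (X (t + j)) = Cz j) (s t : ℤ) :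
    ∫ ω, X s ω * X t ω ∂μ = Cz (t - s) := by
  simpa [cov, hcent] using hstat s (t - s)

theorem integral_hatSigmaSq_eq_sum_sum (K : ℝ → ℝ) (hL2 : ∀ t, MemLp (X t) 2 μ)
    (hcent : ∀ t, ∫ ω, X t ω ∂μ = 0) (hstat : ∀ t j : ℤ, cov μ (X t) (X (t + j)) = Cz j)
    (m n : ℕ) :
    ∫ ω, hatSigmaSq X K m n ω ∂μ
      = (n : ℝ)⁻¹ * ∑ s ∈ Icc 1 n, ∑ t ∈ Icc 1 n, K (|((t - s : ℤ) : ℝ)| / m) * Cz (t - s) := by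
  have hint (s t : ℤ) : Integrable (fun ω => K (|(s : ℝ) - t| / m) * X s ω * X t ω) μ := by
    simpa only [mul_assoc, Pi.mul_apply] using ((hL2 s).integrable_mul (hL2 t)).const_mul _
  have hterm (s t : ℤ) : ∫ ω, K (|(s : ℝ) - t| / m) * X s ω * X t ω ∂μ
      = K (|((t - s : ℤ) : ℝ)| / m) * Cz (t - s) := by
    simp_rw [mul_assoc, integral_const_mul, integral_mul_eq_of_cov_eq hcent hstat, Int.cast_sub,
      abs_sub_comm]
  unfold hatSigmaSq
  rw [integral_const_mul, integral_finsetSum _ fun s _ => integrable_finsetSum _ fun t _ => hint s t,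
    ← Nat.cast_one, sum_Icc_intCast]
  congr 1
  refine sum_congr rfl fun s _ => ?_
  rw [integral_finsetSum _ fun t _ => hint s t, sum_Icc_intCast]
  simp_rw [hterm]

theorem integral_hatSigmaSq_eq {K : ℝ → ℝ} (hL2 : ∀ t, MemLp (X t) 2 μ)
    (hcent : ∀ t, ∫ ω, X t ω ∂μ = 0) (hstat : ∀ t j : ℤ, cov μ (X t) (X (t + j)) = Cz j)
    (hK0 : K 0 = 1) (m n : ℕ) :
    ∫ ω, hatSigmaSq X K m n ω ∂μ
      = (n : ℝ)⁻¹ * (n * Cz 0 + 2 * ∑ j ∈ Icc 1 n, ((n : ℝ) - j) * (K (j / m) * Cz j)) := by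
  have hF : Function.Even fun j : ℤ => K (|(j : ℝ)| / m) * Cz j := fun j => by
    simp only [Int.cast_neg, abs_neg, even_of_cov_eq hstat j]
  rw [integral_hatSigmaSq_eq_sum_sum K hL2 hcent hstat, sum_Icc_sum_Icc_apply_sub hF]
  simp [hK0]

end Stationary

theorem bias_hatSigmaSq_general {Ω : Type*} [MeasurableSpace Ω]
    (μ : Measure Ω) (X : ℤ → Ω → ℝ) (K : ℝ → ℝ) (Cz : ℤ → ℝ)
    (hL2 : ∀ t, MemLp (X t) 2 μ)
    (hcent : ∀ t, ∫ ω, X t ω ∂μ = 0)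
    (hstat : ∀ t j : ℤ, cov μ (X t) (X (t + j)) = Cz j)
    (hCsum : Summable (fun j : ℕ => (j : ℝ) * |Cz j|))
    (hK0 : K 0 = 1)
    (hKcont : ContinuousWithinAt K (Set.Ici 0) 0)
    (hKbdd : ∃ M : ℝ, ∀ x : ℝ, 0 ≤ x → |K x| ≤ M) :
    (∃ B : ℝ, ∀ m n : ℕ, 1 ≤ m → 1 ≤ n →
      |(∫ ω, hatSigmaSq X K m n ω ∂μ) - (∑' j : ℤ, Cz j) -
          2 * ∑ j ∈ Finset.Icc 1 n, (K ((j : ℝ) / (m : ℝ)) - 1) * Cz (j : ℤ)| ≤ B / n) ∧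
    Tendsto
      (fun q : ℕ × ℕ => (∫ ω, hatSigmaSq X K q.1 q.2 ω ∂μ) - ∑' j : ℤ, Cz j)
      (atTop ×ˢ atTop) (𝓝 0) := by
  obtain ⟨M, hM⟩ := hKbdd
  set S := ∑' j : ℕ, (j : ℝ) * |Cz j|
  have habs := summable_abs_of_summable_natCast_mul_abs hCsum
  have hσ : ∑' j : ℤ, Cz j = Cz 0 + 2 * ∑' j : ℕ, Cz (j + 1 : ℕ) :=
    (even_of_cov_eq hstat).tsum_int_eq habs.of_abs
  have hbias (m n : ℕ) (hn : n ≠ 0) : |(∫ ω, hatSigmaSq X K m n ω ∂μ) - (∑' j : ℤ, Cz j) -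
      2 * ∑ j ∈ Icc 1 n, (K (j / m) - 1) * Cz j| ≤ 2 * (M + 1) * S / n := by
    rw [integral_hatSigmaSq_eq hL2 hcent hstat hK0, hσ]
    exact abs_bias_remainder_le (c := fun j : ℕ => Cz j) (fun j => hM _ (by positivity)) hCsum hn
  refine ⟨⟨2 * (M + 1) * S, fun m n _ hn => hbias m n (by omega)⟩, ?_⟩
  have hrem : Tendsto (fun q : ℕ × ℕ => (∫ ω, hatSigmaSq X K q.1 q.2 ω ∂μ) - (∑' j : ℤ, Cz j) -
      2 * ∑ j ∈ Icc 1 q.2, (K (j / q.1) - 1) * Cz j) (atTop ×ˢ atTop) (𝓝 0) :=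
    squeeze_zero_norm' ((eventually_ne_atTop 0).prod_inr atTop |>.mono fun q hq => hbias _ _ hq)
      ((tendsto_const_div_atTop_nhds_zero_nat _).comp tendsto_snd)
  have hsum := hrem.add <|
    (tendsto_sum_Icc_kernel_sub_one_mul (c := fun j : ℕ => Cz j) hK0 hKcont hM habs).const_mul 2
  rw [mul_zero, add_zero] at hsum
  exact hsum.congr fun q => by ring

/-- Bias expansion: for a centred weakly stationary series with `Σ_j j|C(j)| < ∞` and a bounded
kernel with `K(0) = 1` continuous at `0`,
`E[σ̂²_n] − σ² = 2 Σ_{j=1}^n (K(j/m) − 1) C(j) + O(1/n)`, and hence `E[σ̂²_n] − σ² → 0` as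
`m, n → ∞`. -/
theorem bias_hatSigmaSq {Ω : Type*} [MeasurableSpace Ω]
    (μ : Measure Ω) [IsProbabilityMeasure μ] (X : ℤ → Ω → ℝ) (K : ℝ → ℝ) (Cz : ℤ → ℝ)
    (hL2 : ∀ t, MemLp (X t) 2 μ)
    (hcent : ∀ t, ∫ ω, X t ω ∂μ = 0)
    (hstat : ∀ t j : ℤ, cov μ (X t) (X (t + j)) = Cz j)
    (hCsum : Summable (fun j : ℕ => (j : ℝ) * |Cz j|))
    (hK0 : K 0 = 1)
    (hKcont : ContinuousWithinAt K (Set.Ici 0) 0)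
    (hKbdd : ∃ M : ℝ, ∀ x : ℝ, 0 ≤ x → |K x| ≤ M) :
    (∃ B : ℝ, ∀ m n : ℕ, 1 ≤ m → 1 ≤ n →
      |(∫ ω, hatSigmaSq X K m n ω ∂μ) - (∑' j : ℤ, Cz j) -
          2 * ∑ j ∈ Finset.Icc 1 n, (K ((j : ℝ) / (m : ℝ)) - 1) * Cz (j : ℤ)| ≤ B / n) ∧
    Tendsto
      (fun q : ℕ × ℕ => (∫ ω, hatSigmaSq X K q.1 q.2 ω ∂μ) - ∑' j : ℤ, Cz j)
      (atTop ×ˢ atTop) (𝓝 0) :=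
  bias_hatSigmaSq_general μ X K Cz hL2 hcent hstat hCsum hK0 hKcont hKbdd
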